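/- The function W : (ℂ∖{0})² → ℂ defined by W(y_1, y_2) = 3y_1 + 4y_2 + y_1^{−1}y_2 + 4·y_1^{−1} + y_1^{−1}y_2^{−1} + (1/2)·y_2^{−1} − (5/2)·y_1 y_2^{−1} + y_1^{2} y_2^{−1} has exactly 8 critical points, and each of these critical points is nondegenerate. -/

import Mathlib

/-!
Write `∂W/∂y₁ = P/(2y₁²y₂)` and `∂W/∂y₂ = Q/(2y₁y₂²)` with polynomials `P, Q`; as `P` and `Q` have
no common zero on the coordinate axes, the critical points are the common zeros of `P` and `Q`.
The ideal `(P, Q)` contains an octic `E(y₁) = A P + B Q` and `c₁(y₁) y₂ + c₀(y₁)`, and the matrix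
expressing these two through `P, Q` has determinant `-c₁²`. Since `c₁` has no common root with `E`,
the critical points are the points `(a, -c₀(a)/c₁(a))` over the roots `a` of `E`, and `E` is
separable, so there are 8 of them. At a critical point the Hessian determinant of `W` is the
Jacobian determinant `J` of `(P, Q)` divided by `4y₁³y₂³`, and differentiating `E = A P + B Q`
gives `E' + c₁ J ∈ (P, Q)`; as the roots of `E` are simple, `J` does not vanish there.
-/

/-- The potential function of the monotone fiber `L(4,4.5)` in `X̂₉` with the chosen bulk deformation (energy factor dropped). -/
noncomputable def W : ℂ → ℂ → ℂ := fun y₁ y₂ =>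
  3 * y₁ + 4 * y₂ + y₁⁻¹ * y₂ + 4 * y₁⁻¹ + y₁⁻¹ * y₂⁻¹ + (1 / 2) * y₂⁻¹ - (5 / 2) * y₁ * y₂⁻¹ + y₁ ^ 2 * y₂⁻¹

/-- A point of `(ℂ∖{0})²` is a critical point of `W` if both partial
derivatives of `W` vanish there. -/
def IsCritPt (p : ℂ × ℂ) : Prop :=
  p.1 ≠ 0 ∧ p.2 ≠ 0 ∧
    deriv (fun z => W z p.2) p.1 = 0 ∧ deriv (fun z => W p.1 z) p.2 = 0

/-- The Hessian determinant
`(∂²W/∂y₁²)(∂²W/∂y₂²) - (∂²W/∂y₁∂y₂)²` of `W` at a point. -/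
noncomputable def hessDet (p : ℂ × ℂ) : ℂ :=
  deriv (deriv (fun z => W z p.2)) p.1 * deriv (deriv (fun z => W p.1 z)) p.2
    - (deriv (fun w => deriv (fun z => W z w) p.1) p.2) ^ 2

open Polynomial

theorem ne_zero_of_mul_add_mul_ne_zero {R : Type*} [NonUnitalNonAssocSemiring R] {u v f g : R}
    (h : u * f + v * g ≠ 0) (hf : f = 0) : g ≠ 0 := by
  rintro rfl
  simp [hf] at h

section Laurent

variable {𝕜 : Type*} [NontriviallyNormedField 𝕜] {x : 𝕜}

theorem hasDerivAt_laurent (a b c d : 𝕜) (hx : x ≠ 0) :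
    HasDerivAt (fun z => a * z + b + c * z⁻¹ + d * z ^ 2) (a - c * (x ^ 2)⁻¹ + 2 * d * x) x := by
  refine ((((hasDerivAt_id x).const_mul a).add_const b).add ((hasDerivAt_inv hx).const_mul c)
    |>.add ((hasDerivAt_pow 2 x).const_mul d)).congr_deriv ?_
  simp only [Nat.cast_ofNat]
  ring

theorem deriv_deriv_laurent (a b c d : 𝕜) (hx : x ≠ 0) :
    deriv (deriv fun z => a * z + b + c * z⁻¹ + d * z ^ 2) x = 2 * c * (x ^ 3)⁻¹ + 2 * d := by
  have hev : deriv (fun z => a * z + b + c * z⁻¹ + d * z ^ 2) =ᶠ[nhds x]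
      fun z => a - c * (z ^ 2)⁻¹ + 2 * d * z := by
    filter_upwards [isOpen_ne.mem_nhds hx] with z hz
    exact (hasDerivAt_laurent a b c d hz).deriv
  rw [hev.deriv_eq]
  refine HasDerivAt.deriv (((hasDerivAt_const x a).sub
    (((hasDerivAt_pow 2 x).inv (pow_ne_zero 2 hx)).const_mul c)).add
    ((hasDerivAt_id x).const_mul (2 * d)) |>.congr_deriv ?_)
  field_simp
  ring

end Laurent

namespace W

variable {x y : ℂ}

noncomputable def numFst (x y : ℂ) : ℂ :=
  4 * x ^ 3 + 6 * x ^ 2 * y - 5 * x ^ 2 - 2 * y ^ 2 - 8 * y - 2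

noncomputable def numSnd (x y : ℂ) : ℂ :=
  -2 * x ^ 3 + 5 * x ^ 2 + 8 * x * y ^ 2 + 2 * y ^ 2 - x - 2

/-- The Jacobian determinant of `(numFst, numSnd)`. -/
noncomputable def jacobian (x y : ℂ) : ℂ :=
  (12 * x ^ 2 + 12 * x * y - 10 * x) * (16 * x * y + 4 * y)
    - (6 * x ^ 2 - 4 * y - 8) * (-6 * x ^ 2 + 8 * y ^ 2 + 10 * x - 1)

theorem fst_eq_laurent (y : ℂ) : (fun z => W z y) = fun z =>
    (3 - 5 / 2 * y⁻¹) * z + (4 * y + 1 / 2 * y⁻¹) + (y + 4 + y⁻¹) * z⁻¹ + y⁻¹ * z ^ 2 := by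
  funext z
  simp only [W]
  ring

theorem snd_eq_laurent (x : ℂ) : (fun w => W x w) = fun w =>
    (4 + x⁻¹) * w + (3 * x + 4 * x⁻¹) + (x⁻¹ + 1 / 2 - 5 / 2 * x + x ^ 2) * w⁻¹ + 0 * w ^ 2 := by
  funext w
  simp only [W]
  ring

theorem deriv_fst_eq (y : ℂ) (hx : x ≠ 0) :
    deriv (fun z => W z y) x = 3 - 5 / 2 * y⁻¹ - (y + 4 + y⁻¹) * (x ^ 2)⁻¹ + 2 * y⁻¹ * x := by
  rw [fst_eq_laurent, (hasDerivAt_laurent _ _ _ _ hx).deriv]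

theorem deriv_fst (hx : x ≠ 0) (hy : y ≠ 0) :
    deriv (fun z => W z y) x = numFst x y / (2 * x ^ 2 * y) := by
  rw [deriv_fst_eq y hx, numFst]
  field_simp
  ring

theorem deriv_snd (hx : x ≠ 0) (hy : y ≠ 0) :
    deriv (fun w => W x w) y = numSnd x y / (2 * x * y ^ 2) := by
  rw [snd_eq_laurent, (hasDerivAt_laurent _ _ _ _ hy).deriv, numSnd]
  field_simp
  ring

theorem deriv_deriv_fst (hx : x ≠ 0) (hy : y ≠ 0) :
    deriv (deriv fun z => W z y) x = (2 * x ^ 3 + 2 * y ^ 2 + 8 * y + 2) / (x ^ 3 * y) := by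
  rw [fst_eq_laurent, deriv_deriv_laurent _ _ _ _ hx]
  field_simp
  ring

theorem deriv_deriv_snd (hx : x ≠ 0) (hy : y ≠ 0) :
    deriv (deriv fun w => W x w) y = (2 * x ^ 3 - 5 * x ^ 2 + x + 2) / (x * y ^ 3) := by
  rw [snd_eq_laurent, deriv_deriv_laurent _ _ _ _ hy]
  field_simp
  ring

theorem deriv_snd_deriv_fst (hx : x ≠ 0) (hy : y ≠ 0) :
    deriv (fun w => deriv (fun z => W z w) x) y
      = (-2 * x ^ 3 + 5 / 2 * x ^ 2 - y ^ 2 + 1) / (x ^ 2 * y ^ 2) := by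
  have hfun : (fun w => deriv (fun z => W z w) x) = fun w =>
      -(x ^ 2)⁻¹ * w + (3 - 4 * (x ^ 2)⁻¹) + (2 * x - 5 / 2 - (x ^ 2)⁻¹) * w⁻¹ + 0 * w ^ 2 := by
    funext w
    rw [deriv_fst_eq w hx]
    ring
  rw [hfun, (hasDerivAt_laurent _ _ _ _ hy).deriv]
  field_simp
  ring

theorem ne_zero_of_numFst_eq_zero_of_numSnd_eq_zero (hP : numFst x y = 0) (hQ : numSnd x y = 0) :
    x ≠ 0 ∧ y ≠ 0 := by
  constructor
  · rintro rfl
    have h : (y - 1 / 2) * numFst 0 y + (y + 7 / 2) * numSnd 0 y = -6 := by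
      simp only [numFst, numSnd]
      ring
    exact ne_zero_of_mul_add_mul_ne_zero (by rw [h]; norm_num) hP hQ
  · rintro rfl
    have h : (86 * x ^ 2 - 63 * x - 173) * numFst x 0 + (172 * x ^ 2 + 89 * x - 52) * numSnd x 0
        = 450 := by
      simp only [numFst, numSnd]
      ring
    exact ne_zero_of_mul_add_mul_ne_zero (by rw [h]; norm_num) hP hQ

theorem isCritPt_iff : IsCritPt (x, y) ↔ numFst x y = 0 ∧ numSnd x y = 0 := by
  refine ⟨fun ⟨hx, hy, h₁, h₂⟩ => ?_, fun ⟨hP, hQ⟩ => ?_⟩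
  · rw [deriv_fst hx hy] at h₁
    rw [deriv_snd hx hy] at h₂
    simp_all
  · obtain ⟨hx, hy⟩ := ne_zero_of_numFst_eq_zero_of_numSnd_eq_zero hP hQ
    exact ⟨hx, hy, by rw [deriv_fst hx hy, hP, zero_div], by rw [deriv_snd hx hy, hQ, zero_div]⟩

/-- At a critical point the Hessian matrix of `W` is `diag((2x²y)⁻¹, (2xy²)⁻¹)` times the
Jacobian matrix of `(numFst, numSnd)`. -/
theorem hessDet_eq (hP : numFst x y = 0) (hQ : numSnd x y = 0) :
    hessDet (x, y) = jacobian x y / (4 * x ^ 3 * y ^ 3) := by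
  obtain ⟨hx, hy⟩ := ne_zero_of_numFst_eq_zero_of_numSnd_eq_zero hP hQ
  dsimp only [hessDet]
  rw [deriv_deriv_fst hx hy, deriv_deriv_snd hx hy, deriv_snd_deriv_fst hx hy]
  simp only [numFst, numSnd, jacobian] at hP hQ ⊢
  field_simp
  linear_combination 4 * (-48 * x * y ^ 2 - 5 * x ^ 2 - 14 * y ^ 2 + 2 * x + 6) * hP
    + 4 * (18 * x ^ 2 * y - 10 * x ^ 2 - 16 * y ^ 2 - 56 * y - 12) * hQ

noncomputable def elimPoly : ℂ[X] :=
  448 * X ^ 8 - 1008 * X ^ 7 + 2904 * X ^ 6 - 5256 * X ^ 5 - 576 * X ^ 4 + 4608 * X ^ 3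
    + 836 * X ^ 2 - 864 * X - 192

noncomputable def c₁ (x : ℂ) : ℂ := 48 * x ^ 3 + 12 * x ^ 2 - 64 * x - 16

noncomputable def c₀ (x : ℂ) : ℂ := 32 * x ^ 4 - 36 * x ^ 3 - 18 * x - 8

noncomputable def elimCoeffFst (x y : ℂ) : ℂ :=
  256 * x ^ 5 - 384 * x ^ 4 * y - 224 * x ^ 4 - 192 * x ^ 3 * y - 72 * x ^ 3 + 488 * x ^ 2 * y
    - 144 * x ^ 2 + 256 * x * y - 100 * x + 32 * y - 16

noncomputable def elimCoeffSnd (x y : ℂ) : ℂ :=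
  288 * x ^ 5 + 136 * x ^ 4 - 96 * x ^ 3 * y - 840 * x ^ 3 - 24 * x ^ 2 * y - 192 * x ^ 2
    + 128 * x * y + 476 * x + 32 * y + 112

theorem eval_elimPoly (x y : ℂ) :
    elimPoly.eval x = elimCoeffFst x y * numFst x y + elimCoeffSnd x y * numSnd x y := by
  simp only [elimPoly, elimCoeffFst, elimCoeffSnd, numFst, numSnd, eval_sub, eval_add, eval_mul,
    eval_pow, eval_X, eval_ofNat]
  ring

theorem c₁_mul_add_c₀ (x y : ℂ) :
    c₁ x * y + c₀ x = (8 * x + 2) * numFst x y + 2 * numSnd x y := by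
  simp only [c₁, c₀, numFst, numSnd]
  ring

theorem c₁_sq (x y : ℂ) : c₁ x ^ 2 = (8 * x + 2) * elimCoeffSnd x y - 2 * elimCoeffFst x y := by
  simp only [c₁, elimCoeffFst, elimCoeffSnd]
  ring

theorem eval_derivative_elimPoly_add (x y : ℂ) :
    (derivative elimPoly).eval x + c₁ x * jacobian x y
      = (2048 * x ^ 4 - 768 * x ^ 3 * y - 1216 * x ^ 3 - 192 * x ^ 2 * y - 432 * x ^ 2
          + 1024 * x * y - 288 * x + 256 * y - 72) * numFst x y
        + (1440 * x ^ 4 + 800 * x ^ 3 - 2736 * x ^ 2 - 384 * x + 440) * numSnd x y := by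
  simp only [elimPoly, c₁, jacobian, numFst, numSnd, derivative_sub, derivative_add,
    derivative_mul, derivative_X_pow, derivative_X, derivative_ofNat, eval_sub, eval_add,
    eval_mul, eval_pow, eval_X, eval_ofNat, eval_C, eval_zero, eval_one]
  ring

theorem eval_elimPoly_eq_zero (hP : numFst x y = 0) (hQ : numSnd x y = 0) :
    elimPoly.eval x = 0 := by
  rw [eval_elimPoly x y, hP, hQ, mul_zero, mul_zero, add_zero]

theorem c₁_ne_zero (hE : elimPoly.eval x = 0) : c₁ x ≠ 0 := by
  have bezout : (-7939406712 * x ^ 2 + 44286750 * x + 10642136191) * elimPoly.eval x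
      + (74101129312 * x ^ 7 - 185666166280 * x ^ 6 + 527155570696 * x ^ 5
          - 1003202927938 * x ^ 4 + 157513383178 * x ^ 3 + 726764672120 * x ^ 2
          - 44342193246 * x - 132716150517) * c₁ x = 80168259600 := by
    simp only [elimPoly, c₁, eval_sub, eval_add, eval_mul, eval_pow, eval_X, eval_ofNat]
    ring
  exact ne_zero_of_mul_add_mul_ne_zero (by rw [bezout]; norm_num) hE

theorem eval_derivative_elimPoly_ne_zero (hE : elimPoly.eval x = 0) :
    (derivative elimPoly).eval x ≠ 0 := by
  have bezout : (-124649932076663068949888 * x ^ 6 + 260356477224446905518356 * x ^ 5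
        - 626786238767032443074372 * x ^ 4 + 970297540226498862358706 * x ^ 3
        + 28852587836327092684504 * x ^ 2 - 569434394652309685667296 * x
        + 72993976599472512562566) * elimPoly.eval x
      + (15581241509582883618736 * x ^ 7 - 36926783827626049207564 * x ^ 6
        + 104123891743806082619662 * x ^ 5 - 192562385916485746407442 * x ^ 4
        - 7130329612193270485736 * x ^ 3 + 177792019079696889061664 * x ^ 2
        - 1287409047298797938307 * x - 28335484095792685533948) * (derivative elimPoly).eval x
      = 10467014751666157889318400 := by
    simp only [elimPoly, derivative_sub, derivative_add, derivative_mul, derivative_X_pow,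
      derivative_X, derivative_ofNat, eval_sub, eval_add, eval_mul, eval_pow, eval_X, eval_ofNat,
      eval_C, eval_zero, eval_one]
    ring
  exact ne_zero_of_mul_add_mul_ne_zero (by rw [bezout]; norm_num) hE

theorem separable_elimPoly : elimPoly.Separable :=
  (isCoprime_iff_aeval_ne_zero_of_isAlgClosed ℂ ℂ _ _).2 fun a => by
    simpa only [coe_aeval_eq_eval, or_iff_not_imp_left, not_not] using
      fun hE => eval_derivative_elimPoly_ne_zero hE

theorem natDegree_elimPoly : elimPoly.natDegree = 8 := by
  unfold elimPoly
  compute_degree!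

theorem mem_rootSet_elimPoly {a : ℂ} : a ∈ elimPoly.rootSet ℂ ↔ elimPoly.eval a = 0 := by
  have hne : elimPoly ≠ 0 := ne_zero_of_natDegree_gt (n := 0) (by rw [natDegree_elimPoly]; norm_num)
  rw [mem_rootSet, coe_aeval_eq_eval]
  exact and_iff_right hne

theorem ncard_rootSet_elimPoly : (elimPoly.rootSet ℂ).ncard = 8 := by
  rw [← Nat.card_coe_set_eq, Nat.card_eq_fintype_card,
    card_rootSet_eq_natDegree separable_elimPoly (IsAlgClosed.splits _), natDegree_elimPoly]

theorem isCritPt_iff_elim : IsCritPt (x, y) ↔ elimPoly.eval x = 0 ∧ c₁ x * y + c₀ x = 0 := by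
  rw [isCritPt_iff]
  refine ⟨fun ⟨hP, hQ⟩ => ⟨eval_elimPoly_eq_zero hP hQ, ?_⟩, fun ⟨hE, hL⟩ => ?_⟩
  · rw [c₁_mul_add_c₀, hP, hQ]
    ring
  rw [eval_elimPoly x y] at hE
  rw [c₁_mul_add_c₀] at hL
  have hc : c₁ x ^ 2 ≠ 0 := pow_ne_zero 2 (c₁_ne_zero (by rw [eval_elimPoly x y, hE]))
  constructor
  · refine (mul_eq_zero.1 ?_).resolve_left hc
    linear_combination elimCoeffSnd x y * hL - 2 * hE + numFst x y * c₁_sq x y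
  · refine (mul_eq_zero.1 ?_).resolve_left hc
    linear_combination (8 * x + 2) * hE - elimCoeffFst x y * hL + numSnd x y * c₁_sq x y

theorem setOf_isCritPt_eq_image :
    {p : ℂ × ℂ | IsCritPt p} = (fun a => (a, -c₀ a / c₁ a)) '' elimPoly.rootSet ℂ := by
  ext ⟨x, y⟩
  rw [Set.mem_ofPred_eq, isCritPt_iff_elim, Set.mem_image]
  constructor
  · rintro ⟨hE, hL⟩
    refine ⟨x, mem_rootSet_elimPoly.2 hE, Prod.ext rfl ?_⟩
    rw [div_eq_iff (c₁_ne_zero hE)]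
    linear_combination -hL
  · rintro ⟨a, ha, ⟨⟩⟩
    have hE := mem_rootSet_elimPoly.1 ha
    refine ⟨hE, ?_⟩
    field_simp [c₁_ne_zero hE]
    ring

theorem hessDet_ne_zero {p : ℂ × ℂ} (hp : IsCritPt p) : hessDet p ≠ 0 := by
  obtain ⟨x, y⟩ := p
  obtain ⟨hP, hQ⟩ := isCritPt_iff.1 hp
  obtain ⟨hx, hy⟩ := ne_zero_of_numFst_eq_zero_of_numSnd_eq_zero hP hQ
  have hJ : c₁ x * jacobian x y ≠ 0 := by
    have h := eval_derivative_elimPoly_add x y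
    rw [hP, hQ, mul_zero, mul_zero, add_zero] at h
    rw [eq_neg_of_add_eq_zero_right h, neg_ne_zero]
    exact eval_derivative_elimPoly_ne_zero (eval_elimPoly_eq_zero hP hQ)
  rw [hessDet_eq hP hQ]
  exact div_ne_zero (right_ne_zero_of_mul hJ) (by simp [hx, hy])

end W

/-- `W` has exactly 8 critical points in `(ℂ∖{0})²`, and each of them is
nondegenerate (nonvanishing Hessian determinant). -/
theorem W_critical_points :
    {p : ℂ × ℂ | IsCritPt p}.ncard = 8 ∧
      ∀ p : ℂ × ℂ, IsCritPt p → hessDet p ≠ 0 := by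
  refine ⟨?_, fun _ => W.hessDet_ne_zero⟩
  rw [W.setOf_isCritPt_eq_image, Set.ncard_image_of_injective _ fun a b h => congrArg Prod.fst h,
    W.ncard_rootSet_elimPoly]
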